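/- Let n ≥ 4 be an integer. Then the 2-total bondage number of the complete graph K_n equals 2n − 4: b_t^2(K_n) = 2n − 4. -/

import Mathlib

open SimpleGraph

/-- A set `S` of vertices is a total dominating set of `G` if every vertex of `G`
is adjacent to at least one vertex of `S`. -/
def IsTotalDominatingSet {V : Type*} (G : SimpleGraph V) (S : Set V) : Prop :=
  ∀ v : V, ∃ u ∈ S, G.Adj v u

/-- The total domination number of `G`: the minimum cardinality of a total
dominating set of `G`. -/
noncomputable def totalDominationNumber {V : Type*} (G : SimpleGraph V) : ℕ :=
  sInf {n : ℕ | ∃ S : Set V, S.ncard = n ∧ IsTotalDominatingSet G S}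

/-- A graph has no isolated vertices if every vertex has a neighbor. -/
def NoIsolatedVerts {V : Type*} (G : SimpleGraph V) : Prop :=
  ∀ v : V, ∃ u : V, G.Adj v u

/-- The `k`-total bondage number of `G`: the minimum cardinality of a set `F` of
edges of `G` such that `G − F` has no isolated vertices and the total domination
number of `G − F` is at least `γ_t(G) + k`. -/
noncomputable def kTotalBondage {V : Type*} (G : SimpleGraph V) (k : ℕ) : ℕ :=
  sInf {m : ℕ | ∃ F : Set (Sym2 V), F ⊆ G.edgeSet ∧ F.ncard = m ∧
    NoIsolatedVerts (G.deleteEdges F) ∧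
    totalDominationNumber G + k ≤ totalDominationNumber (G.deleteEdges F)}

open Finset

/-!
Write `H = K_n − F`; then `F` is the edge set of the complement `D = Hᶜ`, and `γ_t(H) ≥ 4` says
that no set `{u, b, c}` totally dominates `H`. For an edge `ub` of `H` this forces at least two
`D`-neighbours of `u` to be `D`-adjacent to `b`. Double counting the pairs (`D`-neighbour of `u`,
`H`-neighbour of `u`) at a vertex `u` of minimum `D`-degree `δ` with `h = deg_H u` gives
`∑ deg_D ≥ (δ + 2h) + (h + 1)δ`, and trivially `∑ deg_D ≥ nδ`. As `δ ≥ 2` and `n = δ + h + 1`,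
the first bound gives `4n − 8` when `h ≥ 2` and the second when `h = 1`.

Conversely, deleting all edges between two vertices `a, b` and the other `n − 2` vertices leaves
`K_2 ∪ K_{n−2}`, and a total dominating set of it needs two vertices in each part.
-/

variable {V : Type*}

section TotalDomination

variable {G : SimpleGraph V} {S : Set V}

theorem totalDominationNumber_le_ncard (hS : IsTotalDominatingSet G S) :
    totalDominationNumber G ≤ S.ncard :=
  Nat.sInf_le ⟨S, rfl, hS⟩

theorem le_totalDominationNumber {k : ℕ} (hG : NoIsolatedVerts G)
    (h : ∀ S, IsTotalDominatingSet G S → k ≤ S.ncard) : k ≤ totalDominationNumber G :=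
  le_csInf ⟨_, Set.univ, rfl, fun v ↦ (hG v).imp fun u hu ↦ ⟨Set.mem_univ u, hu⟩⟩
    (by rintro _ ⟨S, rfl, hS⟩; exact h S hS)

theorem IsTotalDominatingSet.one_lt_ncard_inter [Finite V] (hS : IsTotalDominatingSet G S)
    {A : Set V} (hA : ∀ x y, G.Adj x y → x ∈ A → y ∈ A) {x : V} (hx : x ∈ A) :
    1 < (S ∩ A).ncard := by
  obtain ⟨t, htS, hxt⟩ := hS x
  obtain ⟨t', ht'S, htt'⟩ := hS t
  have htA := hA x t hxt hx
  exact (Set.one_lt_ncard_iff).2 ⟨t, t', ⟨htS, htA⟩, ⟨ht'S, hA t t' htt' htA⟩, htt'.ne⟩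

theorem totalDominationNumber_top [Finite V] [Nontrivial V] :
    totalDominationNumber (⊤ : SimpleGraph V) = 2 := by
  obtain ⟨a, b, hab⟩ := exists_pair_ne V
  have hTDS : IsTotalDominatingSet ⊤ ({a, b} : Set V) := fun v ↦ by
    by_cases hva : v = a
    · exact ⟨b, by simp, by simpa [hva] using hab⟩
    · exact ⟨a, by simp, by simpa using hva⟩
  refine le_antisymm ((totalDominationNumber_le_ncard hTDS).trans (Set.ncard_pair hab).le) ?_
  refine le_totalDominationNumber (fun v ↦ (exists_ne v).imp fun _ h ↦ h.symm) fun S hS ↦ ?_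
  have := hS.one_lt_ncard_inter (A := Set.univ) (fun _ _ _ ↦ id) (Set.mem_univ a)
  rwa [Set.inter_univ] at this

end TotalDomination

section LowerBound

variable {H : SimpleGraph V}

/-- Otherwise `{u, b, c}` would be a total dominating set. -/
theorem exists_compl_adj_not_adj_not_adj (h4 : 4 ≤ totalDominationNumber H) {u b : V}
    (hub : H.Adj u b) (c : V) : ∃ v, Hᶜ.Adj u v ∧ ¬H.Adj v b ∧ ¬H.Adj v c := by
  by_contra! hc
  have hTDS : IsTotalDominatingSet H {u, b, c} := fun v ↦ by
    by_cases hvu : v = u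
    · exact ⟨b, by simp, hvu ▸ hub⟩
    by_cases huv : Hᶜ.Adj u v
    · by_cases hvb : H.Adj v b
      · exact ⟨b, by simp, hvb⟩
      · exact ⟨c, by simp, hc v huv hvb⟩
    · exact ⟨u, by simp, by simpa [compl_adj, Ne.symm hvu, adj_comm] using huv⟩
  have h3 : ({u, b, c} : Set V).ncard ≤ 3 :=
    (Set.ncard_insert_le _ _).trans (Nat.succ_le_succ ((Set.ncard_insert_le _ _).trans (by simp)))
  have := totalDominationNumber_le_ncard hTDS
  omega

variable [Fintype V] [DecidableEq V] [DecidableRel H.Adj]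

theorem two_le_card_filter_compl_adj (hiso : NoIsolatedVerts H)
    (h4 : 4 ≤ totalDominationNumber H) {u b : V} (hub : H.Adj u b) :
    2 ≤ #{v ∈ Hᶜ.neighborFinset u | Hᶜ.Adj v b} := by
  have mem {v} (huv : Hᶜ.Adj u v) (hvb : ¬H.Adj v b) :
      v ∈ {v ∈ Hᶜ.neighborFinset u | Hᶜ.Adj v b} := by
    refine mem_filter.2 ⟨(mem_neighborFinset _ _ _).2 huv, (compl_adj _ _ _).2 ⟨?_, hvb⟩⟩
    rintro rfl
    exact ((compl_adj _ _ _).1 huv).2 hub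
  obtain ⟨v, huv, hvb, -⟩ := exists_compl_adj_not_adj_not_adj h4 hub b
  obtain ⟨c, hvc⟩ := hiso v
  obtain ⟨w, huw, hwb, hwc⟩ := exists_compl_adj_not_adj_not_adj h4 hub c
  exact one_lt_card.2 ⟨v, mem huv hvb, w, mem huw hwb, by rintro rfl; exact hwc hvc⟩

theorem degree_compl_add_two_mul_degree_le_sum (hiso : NoIsolatedVerts H)
    (h4 : 4 ≤ totalDominationNumber H) (u : V) :
    Hᶜ.degree u + 2 * H.degree u ≤ ∑ t ∈ Hᶜ.neighborFinset u, Hᶜ.degree t := by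
  have hdeg (t) (ht : t ∈ Hᶜ.neighborFinset u) :
      1 + #((H.neighborFinset u).bipartiteAbove Hᶜ.Adj t) ≤ Hᶜ.degree t := by
    rw [← card_neighborFinset_eq_degree, add_comm, ← card_insert_of_notMem (a := u) (by simp)]
    refine card_le_card (insert_subset ?_ fun b hb ↦ ?_)
    · exact (mem_neighborFinset _ _ _).2 ((mem_neighborFinset _ _ _).1 ht).symm
    · exact (mem_neighborFinset _ _ _).2 (mem_filter.1 hb).2
  calc Hᶜ.degree u + 2 * H.degree u
      = ∑ t ∈ Hᶜ.neighborFinset u, 1 + #(H.neighborFinset u) * 2 := by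
        simp [card_neighborFinset_eq_degree, mul_comm]
    _ ≤ ∑ t ∈ Hᶜ.neighborFinset u, 1 +
          ∑ b ∈ H.neighborFinset u, #((Hᶜ.neighborFinset u).bipartiteBelow Hᶜ.Adj b) := by
        gcongr
        exact card_nsmul_le_sum _ _ _ fun b hb ↦
          two_le_card_filter_compl_adj hiso h4 ((mem_neighborFinset _ _ _).1 hb)
    _ = ∑ t ∈ Hᶜ.neighborFinset u, (1 + #((H.neighborFinset u).bipartiteAbove Hᶜ.Adj t)) := by
        rw [sum_add_distrib, sum_card_bipartiteAbove_eq_sum_card_bipartiteBelow]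
    _ ≤ ∑ t ∈ Hᶜ.neighborFinset u, Hᶜ.degree t := sum_le_sum hdeg

theorem four_mul_card_le_sum_degree_compl (hiso : NoIsolatedVerts H)
    (h4 : 4 ≤ totalDominationNumber H) : 4 * Fintype.card V ≤ ∑ v, Hᶜ.degree v + 8 := by
  cases isEmpty_or_nonempty V
  · simp
  obtain ⟨u, hu⟩ := Hᶜ.exists_minimal_degree_vertex
  have hmin (v : V) : Hᶜ.degree u ≤ Hᶜ.degree v := hu ▸ Hᶜ.minDegree_le_degree v
  have hcard : Fintype.card V = Hᶜ.degree u + H.degree u + 1 := by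
    have := H.degree_lt_card_verts u
    rw [degree_compl]
    omega
  have hH : 1 ≤ H.degree u := (H.degree_pos_iff_exists_adj u).2 (hiso u)
  have hD : 2 ≤ Hᶜ.degree u := by
    obtain ⟨b, hub⟩ := hiso u
    exact (two_le_card_filter_compl_adj hiso h4 hub).trans (card_filter_le _ _)
  have hall : Fintype.card V * Hᶜ.degree u ≤ ∑ v, Hᶜ.degree v := by
    simpa using card_nsmul_le_sum univ _ _ fun v _ ↦ hmin v
  have hout : (H.degree u + 1) * Hᶜ.degree u ≤ ∑ v ∈ (Hᶜ.neighborFinset u)ᶜ, Hᶜ.degree v := by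
    have := card_nsmul_le_sum (Hᶜ.neighborFinset u)ᶜ _ _ fun v _ ↦ hmin v
    rwa [card_compl, card_neighborFinset_eq_degree, smul_eq_mul, hcard,
      show Hᶜ.degree u + H.degree u + 1 - Hᶜ.degree u = H.degree u + 1 by omega] at this
  have hin := degree_compl_add_two_mul_degree_le_sum hiso h4 u
  rw [← sum_add_sum_compl (Hᶜ.neighborFinset u)] at hall ⊢
  rcases hH.eq_or_lt with h1 | h2
  · rw [← h1] at hcard
    nlinarith
  · nlinarith

end LowerBound

theorem two_mul_card_sub_four_le_ncard_edgeSet_compl [Fintype V] {H : SimpleGraph V}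
    (hiso : NoIsolatedVerts H) (h4 : 4 ≤ totalDominationNumber H) :
    2 * Fintype.card V - 4 ≤ Hᶜ.edgeSet.ncard := by
  classical
  have := four_mul_card_le_sum_degree_compl hiso h4
  rw [sum_degrees_eq_twice_card_edges] at this
  rw [← coe_edgeFinset, Set.ncard_coe_finset]
  omega

theorem edgeSet_compl_top_deleteEdges {F : Set (Sym2 V)}
    (hF : F ⊆ (⊤ : SimpleGraph V).edgeSet) : ((⊤ : SimpleGraph V).deleteEdges F)ᶜ.edgeSet = F := by
  ext e
  induction e using Sym2.ind with
  | h x y =>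
    have := @hF s(x, y)
    simp only [mem_edgeSet, compl_adj, deleteEdges_adj, top_adj] at this ⊢
    tauto

section Construction

variable {s : Set V}

theorem compl_top_between_compl_adj {x y : V} :
    ((⊤ : SimpleGraph V).between s sᶜ)ᶜ.Adj x y ↔ x ≠ y ∧ (x ∈ s ↔ y ∈ s) := by
  simp only [compl_adj, between_adj, top_adj, Set.mem_compl_iff]
  tauto

theorem ncard_edgeSet_between_le [Finite V] (G : SimpleGraph V) {t : Set V}
    (hst : Disjoint s t) : (G.between s t).edgeSet.ncard ≤ s.ncard * t.ncard := by
  have := (between_isBipartiteWith (G := G) hst).encard_edgeSet_le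
  rwa [← Set.toFinite s |>.cast_ncard_eq, ← Set.toFinite t |>.cast_ncard_eq,
    ← Set.toFinite (G.between s t).edgeSet |>.cast_ncard_eq, ← Nat.cast_mul,
    Nat.cast_le] at this

theorem noIsolatedVerts_compl_top_between (hs : 1 < s.ncard) (hsc : 1 < sᶜ.ncard) :
    NoIsolatedVerts ((⊤ : SimpleGraph V).between s sᶜ)ᶜ := fun x ↦ by
  by_cases hx : x ∈ s
  · obtain ⟨y, hy, hyx⟩ := Set.exists_ne_of_one_lt_ncard hs x
    exact ⟨y, compl_top_between_compl_adj.2 ⟨hyx.symm, by simp [hx, hy]⟩⟩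
  · obtain ⟨y, hy, hyx⟩ := Set.exists_ne_of_one_lt_ncard hsc x
    exact ⟨y, compl_top_between_compl_adj.2 ⟨hyx.symm, by simp_all⟩⟩

theorem four_le_totalDominationNumber_compl_top_between [Finite V] (hs : 1 < s.ncard)
    (hsc : 1 < sᶜ.ncard) : 4 ≤ totalDominationNumber ((⊤ : SimpleGraph V).between s sᶜ)ᶜ := by
  refine le_totalDominationNumber (noIsolatedVerts_compl_top_between hs hsc) fun S hS ↦ ?_
  obtain ⟨x, hx⟩ := Set.nonempty_of_ncard_ne_zero (by omega : s.ncard ≠ 0)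
  obtain ⟨y, hy⟩ := Set.nonempty_of_ncard_ne_zero (by omega : sᶜ.ncard ≠ 0)
  have hside {a b : V} (hab : ((⊤ : SimpleGraph V).between s sᶜ)ᶜ.Adj a b) : a ∈ s ↔ b ∈ s :=
    (compl_top_between_compl_adj.1 hab).2
  have hin := hS.one_lt_ncard_inter (fun _ _ hab ↦ (hside hab).1) hx
  have hout := hS.one_lt_ncard_inter (A := sᶜ) (fun _ _ hab ↦ mt (hside hab).2) hy
  rw [← Set.sdiff_eq] at hout
  rw [← Set.ncard_inter_add_ncard_sdiff_eq_ncard S s]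
  omega

theorem exists_subset_edgeSet_top_four_le_totalDominationNumber [Fintype V]
    (hV : 4 ≤ Fintype.card V) : ∃ F ⊆ (⊤ : SimpleGraph V).edgeSet,
      F.ncard ≤ 2 * Fintype.card V - 4 ∧ NoIsolatedVerts ((⊤ : SimpleGraph V).deleteEdges F) ∧
        4 ≤ totalDominationNumber ((⊤ : SimpleGraph V).deleteEdges F) := by
  obtain ⟨a, b, hab⟩ := Fintype.exists_pair_of_one_lt_card (by omega : 1 < Fintype.card V)
  have hs : ({a, b} : Set V).ncard = 2 := Set.ncard_pair hab
  have hsc : ({a, b} : Set V)ᶜ.ncard = Fintype.card V - 2 := by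
    rw [Set.ncard_compl, hs, Nat.card_eq_fintype_card]
  refine ⟨((⊤ : SimpleGraph V).between {a, b} {a, b}ᶜ).edgeSet, edgeSet_mono le_top, ?_, ?_⟩
  · refine (ncard_edgeSet_between_le ⊤ disjoint_compl_right).trans ?_
    rw [hs, hsc]
    omega
  · rw [deleteEdges_edgeSet, top_sdiff]
    exact ⟨noIsolatedVerts_compl_top_between (by omega) (by omega),
      four_le_totalDominationNumber_compl_top_between (by omega) (by omega)⟩

end Construction

/-- For `n ≥ 4`, the `2`-total bondage number of the complete graph `K_n` is
`2n − 4`. -/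
theorem kTotalBondage_completeGraph_two (n : ℕ) (hn : 4 ≤ n) :
    kTotalBondage (⊤ : SimpleGraph (Fin n)) 2 = 2 * n - 4 := by
  have : Nontrivial (Fin n) := Fin.nontrivial_iff_two_le.2 (by omega)
  have hγ : totalDominationNumber (⊤ : SimpleGraph (Fin n)) = 2 := totalDominationNumber_top
  obtain ⟨F₀, hF₀, hcard, hiso₀, hγ₀⟩ :=
    exists_subset_edgeSet_top_four_le_totalDominationNumber (V := Fin n) (by simpa)
  rw [Fintype.card_fin] at hcard
  unfold kTotalBondage
  refine le_antisymm (le_trans (Nat.sInf_le ⟨F₀, hF₀, rfl, hiso₀, by omega⟩) hcard)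
    (le_csInf ⟨_, F₀, hF₀, rfl, hiso₀, by omega⟩ ?_)
  rintro _ ⟨F, hF, rfl, hiso, hγF⟩
  simpa [edgeSet_compl_top_deleteEdges hF] using
    two_mul_card_sub_four_le_ncard_edgeSet_compl hiso (by omega)
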